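/- Let r : ℝ^d → [0,∞) be Lebesgue measurable. Then ∫_{ℝ^d} ∫_{ℝ^d} f(x) f(y) 1{‖x − y‖ ≤ r(x) + r(y)} dy dx ≤ 2 ∫_{ℝ^d} f(x) (∫_{{y : ‖y − x‖ ≤ 2 r(x)}} f(y) dy) dx. -/

import Mathlib

open MeasureTheory

noncomputable instance piLpMeasurableSpace (p : ENNReal) (d : ℕ) :
    MeasurableSpace (PiLp p (fun _ : Fin d => ℝ)) :=
  MeasurableSpace.comap WithLp.ofLp (inferInstance : MeasurableSpace (Fin d → ℝ))

noncomputable instance piLpMeasureSpace (p : ENNReal) (d : ℕ) :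
    MeasureSpace (PiLp p (fun _ : Fin d => ℝ)) :=
  ⟨(volume : Measure (Fin d → ℝ)).map (WithLp.toLp p)⟩

/-!
Split the pairs with `‖x - y‖ ≤ r x + r y` according to whether `r x ≥ r y` or `r y ≥ r x`:
in the first case `y` lies in the ball of radius `2 r x` around `x`, in the second `x` lies in
the ball of radius `2 r y` around `y`. The integrand `f x f y` is symmetric, so both halves
contribute the same integral over the product space, which is the right-hand side.
-/

open Metric Set

instance (p : ENNReal) (d : ℕ) : SigmaFinite (volume : Measure (PiLp p (fun _ : Fin d => ℝ))) :=
  (MeasurableEquiv.toLp p (Fin d → ℝ)).sigmaFinite_map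

theorem mem_closedBall_two_mul_or_of_dist_le_add {α : Type*} [PseudoMetricSpace α] {x y : α}
    {a b : ℝ} (h : dist x y ≤ a + b) : y ∈ closedBall x (2 * a) ∨ x ∈ closedBall y (2 * b) := by
  rw [mem_closedBall, mem_closedBall, dist_comm y x]
  rcases le_total b a with h | h
  · left; linarith
  · right; linarith

section SetIntegral

variable {X : Type*} [MeasurableSpace X] {μ : Measure X}

theorem setIntegral_union_le_add {f : X → ℝ} (hf : Integrable f μ) (hf0 : 0 ≤ f) {s t : Set X}
    (hs : MeasurableSet s) (ht : MeasurableSet t) :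
    ∫ x in s ∪ t, f x ∂μ ≤ ∫ x in s, f x ∂μ + ∫ x in t, f x ∂μ := by
  rw [← union_sdiff_self, setIntegral_union disjoint_sdiff_right (ht.diff hs) hf.integrableOn
    hf.integrableOn]
  exact add_le_add le_rfl
    (setIntegral_mono_set hf.integrableOn (ae_of_all _ hf0) sdiff_subset.eventuallyLE)

variable [SFinite μ]

theorem setIntegral_prod_le_two_mul_of_subset_union_preimage_swap {F : X × X → ℝ}
    (hF : Integrable F (μ.prod μ)) (hF0 : 0 ≤ F) (hF_swap : ∀ q, F q.swap = F q)
    {A B : Set (X × X)} (hB : MeasurableSet B) (hAB : A ⊆ B ∪ Prod.swap ⁻¹' B) :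
    ∫ q in A, F q ∂μ.prod μ ≤ 2 * ∫ q in B, F q ∂μ.prod μ := by
  have h_swap : ∫ q in Prod.swap ⁻¹' B, F q ∂μ.prod μ = ∫ q in B, F q ∂μ.prod μ := by
    simpa only [hF_swap] using Measure.measurePreserving_swap.setIntegral_preimage_emb
      MeasurableEquiv.prodComm.measurableEmbedding F B
  calc ∫ q in A, F q ∂μ.prod μ
      ≤ ∫ q in B ∪ Prod.swap ⁻¹' B, F q ∂μ.prod μ :=
        setIntegral_mono_set hF.integrableOn (ae_of_all _ hF0) hAB.eventuallyLE
    _ ≤ ∫ q in B, F q ∂μ.prod μ + ∫ q in Prod.swap ⁻¹' B, F q ∂μ.prod μ :=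
        setIntegral_union_le_add hF hF0 hB (measurable_swap hB)
    _ = 2 * ∫ q in B, F q ∂μ.prod μ := by rw [h_swap, two_mul]

theorem setIntegral_prod_eq_integral_integral_indicator {E : Type*} [NormedAddCommGroup E]
    [NormedSpace ℝ E] {F : X × X → E} (hF : Integrable F (μ.prod μ)) {S : Set (X × X)}
    (hS : MeasurableSet S) :
    ∫ q in S, F q ∂μ.prod μ = ∫ x, ∫ y, S.indicator F (x, y) ∂μ ∂μ := by
  rw [← integral_indicator hS, integral_prod _ (hF.indicator hS)]

end SetIntegral

theorem integral_integral_ite_dist_le_add_le {α : Type*} [PseudoMetricSpace α] [MeasurableSpace α]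
    [OpensMeasurableSpace α] [SecondCountableTopology α] (μ : Measure α) [SFinite μ]
    {f : α → ℝ} (hf0 : 0 ≤ f) (hf : Integrable f μ) {r : α → ℝ} (hr : Measurable r) :
    ∫ x, ∫ y, (if dist x y ≤ r x + r y then f x * f y else 0) ∂μ ∂μ ≤
      2 * ∫ x, f x * ∫ y in closedBall x (2 * r x), f y ∂μ ∂μ := by
  set F : α × α → ℝ := fun q => f q.1 * f q.2
  set A : Set (α × α) := {q | dist q.1 q.2 ≤ r q.1 + r q.2}
  set B : Set (α × α) := {q | q.2 ∈ closedBall q.1 (2 * r q.1)}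
  have hF : Integrable F (μ.prod μ) := hf.mul_prod hf
  have hA : MeasurableSet A := measurableSet_le (by fun_prop) (by fun_prop)
  have hB : MeasurableSet B :=
    measurableSet_le (f := fun q : α × α => dist q.2 q.1) (by fun_prop) (by fun_prop)
  have hAB : A ⊆ B ∪ Prod.swap ⁻¹' B := fun q hq => mem_closedBall_two_mul_or_of_dist_le_add hq
  calc ∫ x, ∫ y, (if dist x y ≤ r x + r y then f x * f y else 0) ∂μ ∂μ
      = ∫ q in A, F q ∂μ.prod μ := (setIntegral_prod_eq_integral_integral_indicator hF hA).symm
    _ ≤ 2 * ∫ q in B, F q ∂μ.prod μ :=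
        setIntegral_prod_le_two_mul_of_subset_union_preimage_swap hF
          (fun q => mul_nonneg (hf0 _) (hf0 _)) (fun q => mul_comm _ _) hB hAB
    _ = 2 * ∫ x, f x * ∫ y in closedBall x (2 * r x), f y ∂μ ∂μ := by
        rw [setIntegral_prod_eq_integral_integral_indicator hF hB]
        congr 1
        refine integral_congr_ae (ae_of_all _ fun x => ?_)
        dsimp only
        rw [← integral_const_mul, ← integral_indicator measurableSet_closedBall]
        rfl

theorem double_integral_symmetrization_bound_general
    (d : ℕ) (p : ENNReal) [Fact (1 ≤ p)]
    (f : PiLp p (fun _ : Fin d => ℝ) → ℝ)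
    (hf_nonneg : ∀ x, 0 ≤ f x)
    (hf_int : Integrable f)
    (r : PiLp p (fun _ : Fin d => ℝ) → ℝ)
    (hr_meas : Measurable r) :
    (∫ x, ∫ y, (if dist x y ≤ r x + r y then f x * f y else 0)) ≤
      2 * ∫ x, f x * ∫ y in {y | dist y x ≤ 2 * r x}, f y :=
  integral_integral_ite_dist_le_add_le volume hf_nonneg hf_int hr_meas

/-- for `r : ℝ^d → [0,∞)` measurable,
`∫∫ f(x) f(y) 1{‖x−y‖ ≤ r(x) + r(y)} dy dx
  ≤ 2 ∫ f(x) (∫_{‖y−x‖ ≤ 2 r(x)} f(y) dy) dx`. -/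
theorem double_integral_symmetrization_bound
    (d : ℕ) (hd : 1 ≤ d) (p : ENNReal) [Fact (1 ≤ p)]
    (f : PiLp p (fun _ : Fin d => ℝ) → ℝ)
    (hf_meas : Measurable f) (hf_nonneg : ∀ x, 0 ≤ f x)
    (hf_int : Integrable f)
    (r : PiLp p (fun _ : Fin d => ℝ) → ℝ)
    (hr_meas : Measurable r) (hr_nonneg : ∀ x, 0 ≤ r x) :
    (∫ x, ∫ y, (if dist x y ≤ r x + r y then f x * f y else 0)) ≤
      2 * ∫ x, f x * ∫ y in {y | dist y x ≤ 2 * r x}, f y :=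
  double_integral_symmetrization_bound_general d p f hf_nonneg hf_int r hr_meas
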